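/- Under a gauge transformation given by a smooth map t : X → G acting on a g-valued connection 1-form A by A^t = ad_{t^{-1}} A + t*θ_G, the Chern–Simons 3-form transforms as ⟨A^t, dA^t + (1/3)[A^t,A^t]⟩ − ⟨A, dA + (1/3)[A,A]⟩ = d⟨ad_{t^{-1}}A, t*θ_G⟩ + t*W_G, where W_G = −(1/6)⟨θ_G, [θ_G, θ_G]⟩. -/
import Mathlib


/-- An algebraic model of the calculus of scalar- and `g`-valued differential forms in low
degrees: `Gp` is the module of `g`-valued `p`-forms, `Sp` the module of scalar `p`-forms,
with exterior derivative `d`, graded Lie bracket `[·,·]` and ad-invariant pairing `⟨·,·⟩`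
satisfying the usual graded symmetry, Leibniz, invariance and Jacobi identities. -/
structure FormAlg (G1 G2 G3 S2 S3 S4 : Type*)
    [AddCommGroup G1] [Module ℚ G1] [AddCommGroup G2] [Module ℚ G2]
    [AddCommGroup G3] [Module ℚ G3] [AddCommGroup S2] [Module ℚ S2]
    [AddCommGroup S3] [Module ℚ S3] [AddCommGroup S4] [Module ℚ S4] where
  d1 : G1 →ₗ[ℚ] G2
  d2 : G2 →ₗ[ℚ] G3
  dS2 : S2 →ₗ[ℚ] S3
  dS3 : S3 →ₗ[ℚ] S4
  b11 : G1 →ₗ[ℚ] G1 →ₗ[ℚ] G2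
  b12 : G1 →ₗ[ℚ] G2 →ₗ[ℚ] G3
  p11 : G1 →ₗ[ℚ] G1 →ₗ[ℚ] S2
  p12 : G1 →ₗ[ℚ] G2 →ₗ[ℚ] S3
  p13 : G1 →ₗ[ℚ] G3 →ₗ[ℚ] S4
  p22 : G2 →ₗ[ℚ] G2 →ₗ[ℚ] S4
  b11_symm : ∀ a b, b11 a b = b11 b a
  p11_antisymm : ∀ a b, p11 a b = -p11 b a
  p22_symm : ∀ α β, p22 α β = p22 β α
  d1_sq : ∀ a, d2 (d1 a) = 0
  leib_br : ∀ a b, d2 (b11 a b) = -b12 b (d1 a) - b12 a (d1 b)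
  leib_p11 : ∀ a b, dS2 (p11 a b) = p12 b (d1 a) - p12 a (d1 b)
  leib_p12 : ∀ (a : G1) (β : G2), dS3 (p12 a β) = p22 (d1 a) β - p13 a (d2 β)
  inv_112 : ∀ (a b : G1) (β : G2), p22 (b11 a b) β = p13 a (b12 b β)
  inv_111 : ∀ a b c, p12 a (b11 b c) = p12 c (b11 a b)
  jacobi : ∀ a b c, b12 a (b11 b c) = -b12 c (b11 a b) - b12 b (b11 a c)

/-- under a gauge transformation `t : X → G`, acting on a `g`-valued connection
1-form `A` by `A^t = ad_{t⁻¹}A + t*θ_G`, the Chern–Simons 3-form transforms by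
`CS(A^t) − CS(A) = d⟨ad_{t⁻¹}A, t*θ_G⟩ + t*W_G`, where `W_G = −(1/6)⟨θ_G,[θ_G,θ_G]⟩`
(so `t*W_G = −(1/6)⟨t*θ_G,[t*θ_G,t*θ_G]⟩`).  Here `τ = t*θ_G` satisfies the pulled-back
Maurer–Cartan equation, and `Ad1, Ad2` model `ad_{t⁻¹}` on 1- and 2-forms, compatible with
bracket and pairing and satisfying `d(ad_{t⁻¹}ω) = ad_{t⁻¹}(dω) − [t*θ_G, ad_{t⁻¹}ω]`. -/
theorem stmt6 {G1 G2 G3 S2 S3 S4 : Type*}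
    [AddCommGroup G1] [Module ℚ G1] [AddCommGroup G2] [Module ℚ G2]
    [AddCommGroup G3] [Module ℚ G3] [AddCommGroup S2] [Module ℚ S2]
    [AddCommGroup S3] [Module ℚ S3] [AddCommGroup S4] [Module ℚ S4]
    (FA : FormAlg G1 G2 G3 S2 S3 S4)
    (A τ : G1) (Ad1 : G1 →ₗ[ℚ] G1) (Ad2 : G2 →ₗ[ℚ] G2)
    (hmc : FA.d1 τ = -(1 / 2 : ℚ) • FA.b11 τ τ)
    (hAdb : ∀ a b : G1, Ad2 (FA.b11 a b) = FA.b11 (Ad1 a) (Ad1 b))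
    (hAdp11 : ∀ a b : G1, FA.p11 (Ad1 a) (Ad1 b) = FA.p11 a b)
    (hAdp12 : ∀ (a : G1) (β : G2), FA.p12 (Ad1 a) (Ad2 β) = FA.p12 a β)
    (hAdd : ∀ a : G1, FA.d1 (Ad1 a) = Ad2 (FA.d1 a) - FA.b11 τ (Ad1 a)) :
    FA.p12 (Ad1 A + τ)
        (FA.d1 (Ad1 A + τ) + (1 / 3 : ℚ) • FA.b11 (Ad1 A + τ) (Ad1 A + τ))
      - FA.p12 A (FA.d1 A + (1 / 3 : ℚ) • FA.b11 A A)
      = FA.dS2 (FA.p11 (Ad1 A) τ) + -(1 / 6 : ℚ) • FA.p12 τ (FA.b11 τ τ) := by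
  have h1 : FA.d1 (Ad1 A) = Ad2 (FA.d1 A) - FA.b11 τ (Ad1 A) := hAdd A
  have h2 : FA.p12 (Ad1 A) (Ad2 (FA.d1 A)) = FA.p12 A (FA.d1 A) := hAdp12 A (FA.d1 A)
  have h3 : FA.p12 (Ad1 A) (FA.b11 (Ad1 A) (Ad1 A)) = FA.p12 A (FA.b11 A A) := by
    rw [← hAdb, hAdp12]
  have hl : FA.dS2 (FA.p11 (Ad1 A) τ) = FA.p12 τ (FA.d1 (Ad1 A)) - FA.p12 (Ad1 A) (FA.d1 τ) :=
    FA.leib_p11 (Ad1 A) τ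
  have hsym : FA.b11 τ (Ad1 A) = FA.b11 (Ad1 A) τ := FA.b11_symm τ (Ad1 A)
  have e2 : FA.p12 τ (FA.b11 (Ad1 A) (Ad1 A)) = FA.p12 (Ad1 A) (FA.b11 (Ad1 A) τ) := by
    rw [FA.inv_111 τ (Ad1 A) (Ad1 A), ← hsym]
  have e3 : FA.p12 (Ad1 A) (FA.b11 τ τ) = FA.p12 τ (FA.b11 (Ad1 A) τ) :=
    FA.inv_111 (Ad1 A) τ τ
  rw [hl, h1, hmc]
  simp only [map_add, map_sub, map_smul, map_neg, LinearMap.add_apply, LinearMap.sub_apply,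
    LinearMap.smul_apply, LinearMap.neg_apply, h1, hmc, hsym, h2, h3, e2, e3]
  module
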